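/- Let n ≥ 0 be an integer, t > 0 a real number, and a a complex number with Re(a) > 0. Then for 0 < c < Re(a), the Mellin–Barnes integral (1/(2πi)) ∫_{(c)} Γ(s+n)·Γ(a-s)·t^{-s} ds equals Γ(a+n)·t^n/(1+t)^{a+n}, where the integration is along the vertical line Re(s) = c. -/

import Mathlib

open Complex

/-- The integral `∫_{(c)} g(s) ds` over the vertical line `Re(s) = c`,
from `c - i∞` to `c + i∞`. -/
noncomputable def verticalIntegral (g : ℂ → ℂ) (c : ℝ) : ℂ :=
  ∫ y : ℝ, g (c + y * Complex.I) * Complex.I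

/-!
The integral is the inverse Mellin transform, at `x = t`, of `Γ(s+n) Γ(a-s)`, and this is the
Mellin transform of `f(x) = Γ(a+n) xⁿ (1+x)^{-(a+n)}` on the strip `-n < Re s < Re a`: the
substitution `x = u / (1 - u)` turns the Mellin integral of `(1+x)^{-w}` into the beta integral
`B(s, w-s)`. Mellin inversion applies because `Γ(s+n) Γ(a-s)` is integrable on vertical lines:
`Γ(z+2) = z (z+1) Γ(z)` and `|Γ(z)| ≤ Γ(Re z)` give `|Γ(z)| (1 + (Im z)²) ≤ Γ(Re z) + Γ(Re z + 2)`.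
-/

open Set MeasureTheory

namespace Complex

lemma norm_Gamma_le_Gamma_re {s : ℂ} (hs : 0 < s.re) : ‖Gamma s‖ ≤ Real.Gamma s.re := by
  rw [Gamma_eq_integral hs, Real.Gamma_eq_integral hs, GammaIntegral]
  refine (norm_integral_le_integral_norm _).trans_eq (setIntegral_congr_fun measurableSet_Ioi ?_)
  intro x hx
  simp [norm_cpow_eq_rpow_re_of_pos hx, norm_exp]

lemma norm_Gamma_mul_one_add_im_sq_le {s : ℂ} (hs : 0 < s.re) :
    ‖Gamma s‖ * (1 + s.im ^ 2) ≤ Real.Gamma s.re + Real.Gamma (s.re + 2) := by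
  have hs0 : s ≠ 0 := fun h => by simp [h] at hs
  have hs1 : s + 1 ≠ 0 := fun h => by have := congrArg re h; simp at this; linarith
  have hrec : Gamma (s + 2) = (s + 1) * s * Gamma s := by
    rw [show s + 2 = s + 1 + 1 by ring, Gamma_add_one _ hs1, Gamma_add_one _ hs0, mul_assoc]
  have him_sq : s.im ^ 2 ≤ ‖s + 1‖ * ‖s‖ := by
    rw [← sq_abs, sq]
    exact mul_le_mul (by simpa using abs_im_le_norm (s + 1)) (abs_im_le_norm s)
      (abs_nonneg _) (norm_nonneg _)
  have h2 : ‖Gamma s‖ * s.im ^ 2 ≤ Real.Gamma (s.re + 2) := calc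
    ‖Gamma s‖ * s.im ^ 2 ≤ ‖s + 1‖ * ‖s‖ * ‖Gamma s‖ := by
      rw [mul_comm]; exact mul_le_mul_of_nonneg_right him_sq (norm_nonneg _)
    _ = ‖Gamma (s + 2)‖ := by rw [hrec, norm_mul, norm_mul]
    _ ≤ Real.Gamma (s.re + 2) := by
      simpa using norm_Gamma_le_Gamma_re (s := s + 2) (by simp; linarith)
  linarith [norm_Gamma_le_Gamma_re hs]

lemma continuous_Gamma_comp {f : ℝ → ℂ} (hf : Continuous f) (hre : ∀ y, 0 < (f y).re) :
    Continuous fun y => Gamma (f y) := by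
  refine continuous_iff_continuousAt.mpr fun y => ?_
  refine (differentiableAt_Gamma _ fun m hm => ?_).continuousAt.comp hf.continuousAt
  have := hre y
  rw [hm] at this
  simp at this
  linarith [(Nat.cast_nonneg m : (0:ℝ) ≤ m)]

lemma integrable_Gamma_mul_Gamma_vertical {p q : ℂ} (hp : 0 < p.re) (hq : 0 < q.re) :
    Integrable fun y : ℝ => Gamma (p + y * I) * Gamma (q - y * I) := by
  have hcont : Continuous fun y : ℝ => Gamma (p + y * I) * Gamma (q - y * I) :=
    (continuous_Gamma_comp (by fun_prop) fun y => by simpa using hp).mul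
      (continuous_Gamma_comp (by fun_prop) fun y => by simpa using hq)
  refine ((integrable_inv_one_add_sq.comp_add_right p.im).const_mul
    ((Real.Gamma p.re + Real.Gamma (p.re + 2)) * Real.Gamma q.re)).mono'
    hcont.aestronglyMeasurable (Filter.Eventually.of_forall fun y => ?_)
  have h₁ : ‖Gamma (p + y * I)‖ * (1 + (y + p.im) ^ 2) ≤
      Real.Gamma p.re + Real.Gamma (p.re + 2) := by
    simpa [add_comm] using norm_Gamma_mul_one_add_im_sq_le (s := p + y * I) (by simpa using hp)
  have h₂ : ‖Gamma (q - y * I)‖ ≤ Real.Gamma q.re := by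
    simpa using norm_Gamma_le_Gamma_re (s := q - y * I) (by simpa using hq)
  rw [norm_mul, ← div_eq_mul_inv, le_div_iff₀ (by positivity), mul_right_comm]
  exact mul_le_mul h₁ h₂ (norm_nonneg _) (by positivity)

end Complex

lemma image_div_one_sub_Ioo : (fun u : ℝ => u / (1 - u)) '' Ioo 0 1 = Ioi 0 := by
  ext x
  constructor
  · rintro ⟨u, ⟨hu₀, hu₁⟩, rfl⟩
    exact div_pos hu₀ (sub_pos.mpr hu₁)
  · intro (hx : 0 < x)
    refine ⟨x / (1 + x), ⟨by positivity, (div_lt_one (by positivity)).mpr (by linarith)⟩, ?_⟩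
    field_simp
    ring

lemma hasDerivAt_div_one_sub {u : ℝ} (hu : u ≠ 1) :
    HasDerivAt (fun u : ℝ => u / (1 - u)) ((1 - u) ^ 2)⁻¹ u := by
  have h : 1 - u ≠ 0 := sub_ne_zero.mpr hu.symm
  refine ((hasDerivAt_id' u).div ((hasDerivAt_id' u).const_sub 1) h).congr_deriv ?_
  field_simp
  ring

lemma injOn_div_one_sub : InjOn (fun u : ℝ => u / (1 - u)) (Iio 1) := by
  intro u (hu : u < 1) v (hv : v < 1) h
  have hu' : 1 - u ≠ 0 := by linarith
  have hv' : 1 - v ≠ 0 := by linarith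
  simp only at h
  field_simp at h
  linarith

section
variable {E : Type*} [NormedAddCommGroup E] [NormedSpace ℝ E]

lemma integrableOn_Ioi_iff_div_one_sub (g : ℝ → E) :
    IntegrableOn g (Ioi 0) ↔
      IntegrableOn (fun u => ((1 - u) ^ 2)⁻¹ • g (u / (1 - u))) (Ioo 0 1) := by
  rw [← image_div_one_sub_Ioo, integrableOn_image_iff_integrableOn_abs_deriv_smul measurableSet_Ioo
    (fun u hu => (hasDerivAt_div_one_sub hu.2.ne).hasDerivWithinAt)
    (injOn_div_one_sub.mono fun u hu => hu.2)]
  simp_rw [abs_inv, abs_pow, sq_abs]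

lemma integral_Ioi_eq_integral_div_one_sub (g : ℝ → E) :
    ∫ x in Ioi 0, g x = ∫ u in Ioo 0 1, ((1 - u) ^ 2)⁻¹ • g (u / (1 - u)) := by
  rw [← image_div_one_sub_Ioo, integral_image_eq_integral_abs_deriv_smul measurableSet_Ioo
    (fun u hu => (hasDerivAt_div_one_sub hu.2.ne).hasDerivWithinAt)
    (injOn_div_one_sub.mono fun u hu => hu.2)]
  simp_rw [abs_inv, abs_pow, sq_abs]

end

lemma mellin_integrand_comp_div_one_sub (s w : ℂ) {u : ℝ} (hu : u ∈ Ioo (0 : ℝ) 1) :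
    ((1 - u) ^ 2)⁻¹ • ((↑(u / (1 - u)) : ℂ) ^ (s - 1) • (1 + (↑(u / (1 - u)) : ℂ)) ^ (-w)) =
      (u : ℂ) ^ (s - 1) * (1 - (u : ℂ)) ^ (w - s - 1) := by
  obtain ⟨hu₀, hu₁⟩ := hu
  set r := 1 - u with hr_def
  have hr : 0 < r := sub_pos.mpr hu₁
  have hr' : (r : ℂ) ≠ 0 := ofReal_ne_zero.mpr hr.ne'
  have h1 : 1 + (↑(u / r) : ℂ) = ((r⁻¹ : ℝ) : ℂ) := by
    rw [← ofReal_one, ← ofReal_add]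
    congr 1
    field_simp
    ring
  have hexp : w - s - 1 = w - (s - 1) - 2 := by ring
  rw [h1, ofReal_inv, inv_cpow_ofReal_nonneg hr.le, cpow_neg, inv_inv, ofReal_div,
    div_cpow_ofReal_nonneg hu₀.le hr.le, show (1 : ℂ) - u = r by push_cast [hr_def]; ring, hexp,
    cpow_sub _ 2 hr', cpow_sub w _ hr', cpow_ofNat, real_smul, smul_eq_mul]
  push_cast
  field_simp

lemma hasMellin_one_add_cpow_neg {s w : ℂ} (hs : 0 < s.re) (hsw : s.re < w.re) :
    HasMellin (fun x : ℝ => (1 + (x : ℂ)) ^ (-w)) s (Gamma s * Gamma (w - s) / Gamma w) := by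
  have hws : 0 < (w - s).re := by simpa using hsw
  have heq : EqOn _ (fun u : ℝ => (u : ℂ) ^ (s - 1) * (1 - (u : ℂ)) ^ (w - s - 1)) (Ioo 0 1) :=
    fun u hu => mellin_integrand_comp_div_one_sub s w hu
  constructor
  · rw [MellinConvergent, integrableOn_Ioi_iff_div_one_sub]
    exact ((betaIntegral_convergent hs hws).1.mono_set Ioo_subset_Ioc_self).congr_fun heq.symm
      measurableSet_Ioo
  · rw [mellin, integral_Ioi_eq_integral_div_one_sub, setIntegral_congr_fun measurableSet_Ioo heq,
      ← integral_Ioc_eq_integral_Ioo, ← intervalIntegral.integral_of_le zero_le_one]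
    simpa only [betaIntegral, add_sub_cancel] using betaIntegral_eq_Gamma_mul_div s (w - s) hs hws

lemma hasMellin_cpow_smul_one_add_cpow_neg {b s w : ℂ} (h₀ : 0 < (s + b).re)
    (h₁ : (s + b).re < w.re) :
    HasMellin (fun x : ℝ => (x : ℂ) ^ b • (1 + (x : ℂ)) ^ (-w)) s
      (Gamma (s + b) * Gamma (w - (s + b)) / Gamma w) :=
  ⟨MellinConvergent.cpow_smul.mpr (hasMellin_one_add_cpow_neg h₀ h₁).1,
    (mellin_cpow_smul _ _ _).trans (hasMellin_one_add_cpow_neg h₀ h₁).2⟩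

lemma hasMellin_Gamma_mul_Gamma {a b s : ℂ} (h₀ : 0 < (s + b).re) (h₁ : s.re < a.re) :
    HasMellin (fun x : ℝ => Gamma (a + b) • ((x : ℂ) ^ b • (1 + (x : ℂ)) ^ (-(a + b)))) s
      (Gamma (s + b) * Gamma (a - s)) := by
  have h₁' : (s + b).re < (a + b).re := by simpa using h₁
  have hΓ : Gamma (a + b) ≠ 0 := Gamma_ne_zero_of_re_pos (h₀.trans h₁')
  obtain ⟨hconv, hval⟩ := hasMellin_cpow_smul_one_add_cpow_neg h₀ h₁'
  refine ⟨hconv.const_smul _, ?_⟩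
  rw [mellin_const_smul, hval, show a + b - (s + b) = a - s by ring, smul_eq_mul]
  field_simp

lemma mellinInv_eq_verticalIntegral (σ : ℝ) (F : ℂ → ℂ) (x : ℝ) :
    mellinInv σ F x =
      1 / (2 * Real.pi * I) * verticalIntegral (fun s => F s * (x : ℂ) ^ (-s)) σ := by
  simp only [mellinInv, verticalIntegral, integral_mul_const, real_smul, smul_eq_mul,
    mul_comm (F _)]
  generalize ∫ y : ℝ, (x : ℂ) ^ (-(σ + y * I)) * F (σ + y * I) = J
  have : (Real.pi : ℂ) ≠ 0 := ofReal_ne_zero.mpr Real.pi_ne_zero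
  push_cast
  field_simp

theorem mellinBarnes_beta_general (n : ℕ) (t : ℝ) (ht : 0 < t) (a : ℂ)
    (c : ℝ) (hc0 : 0 < c) (hca : c < a.re) :
    1 / (2 * Real.pi * Complex.I) * verticalIntegral
      (fun s => Complex.Gamma (s + n) * Complex.Gamma (a - s) * (t : ℂ) ^ (-s)) c =
      Complex.Gamma (a + n) * (t : ℂ) ^ (n : ℕ) / (1 + (t : ℂ)) ^ (a + n) := by
  set f : ℝ → ℂ := fun x => Gamma (a + n) • ((x : ℂ) ^ (n : ℂ) • (1 + (x : ℂ)) ^ (-(a + n)))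
  have hf : ∀ s : ℂ, 0 < s.re → s.re < a.re → HasMellin f s (Gamma (s + n) * Gamma (a - s)) :=
    fun s hs hsa => hasMellin_Gamma_mul_Gamma (by simp; positivity) hsa
  have hline : ∀ y : ℝ,
      mellin f (c + y * I) = Gamma (c + y * I + n) * Gamma (a - (c + y * I)) :=
    fun y => (hf _ (by simpa using hc0) (by simpa using hca)).2
  have hvert : VerticalIntegrable (mellin f) c := by
    refine (integrable_Gamma_mul_Gamma_vertical (p := c + n) (q := a - c) (by simp; positivity)
      (by simpa using hca)).congr (.of_forall fun y => ?_)
    simp only [hline]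
    ring_nf
  have hcont : ContinuousAt f t := by
    fun_prop (disch := (rw [mem_slitPlane_iff]; left; simp; linarith))
  calc _ = 1 / (2 * Real.pi * I) * verticalIntegral (fun s => mellin f s * t ^ (-s)) c := by
        simp only [verticalIntegral, hline]
    _ = f t := by
      rw [← mellinInv_eq_verticalIntegral,
        mellinInv_mellin_eq c f ht (hf c (by simpa) (by simpa)).1 hvert hcont]
    _ = _ := by
      simp only [f, smul_eq_mul, cpow_natCast, cpow_neg]
      ring

/-- For `n ≥ 0`, `t > 0`, `Re(a) > 0` and `0 < c < Re(a)`,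
`(1/(2πi)) ∫_{(c)} Γ(s+n) Γ(a-s) t^{-s} ds = Γ(a+n) tⁿ / (1+t)^{a+n}`. -/
theorem mellinBarnes_beta (n : ℕ) (t : ℝ) (ht : 0 < t) (a : ℂ) (ha : 0 < a.re)
    (c : ℝ) (hc0 : 0 < c) (hca : c < a.re) :
    1 / (2 * Real.pi * Complex.I) * verticalIntegral
      (fun s => Complex.Gamma (s + n) * Complex.Gamma (a - s) * (t : ℂ) ^ (-s)) c =
      Complex.Gamma (a + n) * (t : ℂ) ^ (n : ℕ) / (1 + (t : ℂ)) ^ (a + n) :=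
  mellinBarnes_beta_general n t ht a c hc0 hca
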